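/- Let L be an RPQ over a finite alphabet A and let x, y be distinct variables. The Boolean CRPQ ∃x,y (x →^L y) is bounded if and only if L_ff is finite. -/

import Mathlib

namespace RPQ

/-- The extended alphabet `A^±`: `Sum.inl a` is the letter `a`, `Sum.inr a` is its inverse. -/
abbrev Lett (A : Type) := A ⊕ A

/-- `OPath E u w v` holds iff there is an oriented path from `u` to `v` with label `w`
in the graph database with edge relation `E`. -/
inductive OPath {A V : Type} (E : V → A → V → Prop) : V → List (Lett A) → V → Prop
  | nil (v : V) : OPath E v [] v
  | fwd {u v w : V} {a : A} {l : List (Lett A)} :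
      E u a v → OPath E v l w → OPath E u (Sum.inl a :: l) w
  | bwd {u v w : V} {a : A} {l : List (Lett A)} :
      E v a u → OPath E v l w → OPath E u (Sum.inr a :: l) w

/-- Lift a language over `A` to the extended alphabet `A^±` (forward letters only). -/
def liftLang {A : Type} (L : Language A) : Language (Lett A) :=
  (fun w => w.map Sum.inl) '' L

/-- A language over `A^±` using only forward letters (an RPQ, rather than a 2RPQ). -/
def ForwardLang {A : Type} (L : Language (Lett A)) : Prop :=
  ∀ w ∈ L, ∀ x ∈ w, x.isLeft = true

/-- A conjunctive two-way regular path query with free variables indexed by `ι`. -/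
structure C2RPQ (A ι : Type) where
  Var : Type
  finVar : Finite Var
  free : ι → Var
  Idx : Type
  finIdx : Finite Idx
  src : Idx → Var
  tgt : Idx → Var
  lang : Idx → Language (Lett A)

attribute [instance] C2RPQ.finVar C2RPQ.finIdx

/-- Evaluation of a C2RPQ on a graph database. -/
def C2RPQ.eval {A ι : Type} (γ : C2RPQ A ι) {V : Type} (E : V → A → V → Prop)
    (t : ι → V) : Prop :=
  ∃ h : γ.Var → V, (∀ i, h (γ.free i) = t i) ∧
    ∀ j : γ.Idx, ∃ w ∈ γ.lang j, OPath E (h (γ.src j)) w (h (γ.tgt j))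

/-- A union of C2RPQs. -/
abbrev UC2RPQ (A ι : Type) := List (C2RPQ A ι)

def UC2RPQ.eval {A ι : Type} (Γ : UC2RPQ A ι) {V : Type} (E : V → A → V → Prop)
    (t : ι → V) : Prop :=
  ∃ γ ∈ Γ, γ.eval E t

/-- All languages of `Γ` are regular. -/
def UC2RPQ.Regular {A ι : Type} (Γ : UC2RPQ A ι) : Prop :=
  ∀ γ ∈ Γ, ∀ j : γ.Idx, (γ.lang j).IsRegular

/-- `Γ` is a UCRPQ: all its languages use only forward letters. -/
def UC2RPQ.Forward {A ι : Type} (Γ : UC2RPQ A ι) : Prop :=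
  ∀ γ ∈ Γ, ∀ j : γ.Idx, ForwardLang (γ.lang j)

/-- A conjunctive query: atoms are labelled by single letters, plus equality atoms. -/
structure CQ (A ι : Type) where
  Var : Type
  finVar : Finite Var
  free : ι → Var
  atoms : Set (Var × A × Var)
  eqs : Set (Var × Var)

attribute [instance] CQ.finVar

def CQ.eval {A ι : Type} (φ : CQ A ι) {V : Type} (E : V → A → V → Prop)
    (t : ι → V) : Prop :=
  ∃ h : φ.Var → V, (∀ i, h (φ.free i) = t i) ∧
    (∀ x a y, (x, a, y) ∈ φ.atoms → E (h x) a (h y)) ∧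
    (∀ x y, (x, y) ∈ φ.eqs → h x = h y)

/-- A union of conjunctive queries. -/
abbrev UCQ (A ι : Type) := List (CQ A ι)

def UCQ.eval {A ι : Type} (Φ : UCQ A ι) {V : Type} (E : V → A → V → Prop)
    (t : ι → V) : Prop :=
  ∃ φ ∈ Φ, φ.eval E t

/-- `Γ` and `Φ` agree on every (finite) graph database. -/
def EquivUCQ {A ι : Type} (Γ : UC2RPQ A ι) (Φ : UCQ A ι) : Prop :=
  ∀ (V : Type) [Fintype V] (E : V → A → V → Prop) (t : ι → V),
    UC2RPQ.eval Γ E t ↔ UCQ.eval Φ E t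

/-- A UC2RPQ is bounded if it is equivalent to some UCQ. -/
def UC2RPQ.Bounded {A ι : Type} (Γ : UC2RPQ A ι) : Prop :=
  ∃ Φ : UCQ A ι, EquivUCQ Γ Φ

/-- Containment of UC2RPQs. -/
def UC2RPQ.Contained {A ι : Type} (Γ Γ' : UC2RPQ A ι) : Prop :=
  ∀ (V : Type) [Fintype V] (E : V → A → V → Prop) (t : ι → V),
    UC2RPQ.eval Γ E t → UC2RPQ.eval Γ' E t

/-- Equivalence relation on variables generated by the equality atoms. -/
def CQ.eqv {A ι : Type} (φ : CQ A ι) : φ.Var → φ.Var → Prop :=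
  Relation.EqvGen fun x y => (x, y) ∈ φ.eqs

/-- Homomorphism between CQs (fixing the free variables pointwise). -/
def CQHom {A ι : Type} (φ ψ : CQ A ι) : Prop :=
  ∃ h : φ.Var → ψ.Var,
    (∀ i, h (φ.free i) = ψ.free i) ∧
    (∀ x y, φ.eqv x y → ψ.eqv (h x) (h y)) ∧
    ∀ x a y, (x, a, y) ∈ φ.atoms →
      ∃ x' y', (x', a, y') ∈ ψ.atoms ∧ ψ.eqv (h x) x' ∧ ψ.eqv (h y) y'

/-- An expansion of a UC2RPQ `Γ`: a disjunct together with a chosen word for each atom. -/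
structure Expansion {A ι : Type} (Γ : UC2RPQ A ι) where
  γ : C2RPQ A ι
  mem : γ ∈ Γ
  word : ∀ j : γ.Idx, List (Lett A)
  word_mem : ∀ j, word j ∈ γ.lang j

namespace Expansion

variable {A ι : Type} {Γ : UC2RPQ A ι}

/-- Variables of the expansion: variables of the disjunct, plus fresh intermediate
variables for each chosen word (a word of length `k` contributes `k - 1` of them). -/
abbrev EVar (e : Expansion Γ) : Type :=
  e.γ.Var ⊕ (Σ j : e.γ.Idx, Fin ((e.word j).length - 1))

/-- The `p`-th vertex on the fresh oriented path expanding atom `j`. -/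
def node (e : Expansion Γ) (j : e.γ.Idx) (p : ℕ) : e.EVar :=
  if hp : p = 0 then Sum.inl (e.γ.src j)
  else if h : p < (e.word j).length then Sum.inr ⟨j, ⟨p - 1, by omega⟩⟩
  else Sum.inl (e.γ.tgt j)

/-- The CQ associated with an expansion. -/
def cq (e : Expansion Γ) : CQ A ι where
  Var := e.EVar
  finVar := inferInstance
  free := fun i => Sum.inl (e.γ.free i)
  atoms := {t | ∃ (j : e.γ.Idx) (p : ℕ) (a : A),
    ((e.word j)[p]? = some (Sum.inl a) ∧ t = (e.node j p, a, e.node j (p + 1))) ∨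
    ((e.word j)[p]? = some (Sum.inr a) ∧ t = (e.node j (p + 1), a, e.node j p))}
  eqs := {t | ∃ j : e.γ.Idx, e.word j = [] ∧
    t = (Sum.inl (e.γ.src j), Sum.inl (e.γ.tgt j))}

/-- The size `‖λ‖` of an expansion: its number of non-equality atoms. -/
noncomputable def size (e : Expansion Γ) : ℕ := e.cq.atoms.ncard

/-- An expansion is minimal if no expansion of strictly smaller size maps into it. -/
def Minimal (e : Expansion Γ) : Prop :=
  ¬ ∃ e' : Expansion Γ, CQHom e'.cq e.cq ∧ e'.size < e.size

end Expansion


/-- The factor-free sublanguage of `L`: words of `L` with no proper factor in `L`. -/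
def Lff {A : Type} (L : Language A) : Language A :=
  {w | w ∈ L ∧ ¬ ∃ v, v ∈ L ∧ v <:+: w ∧ v ≠ w}

/-- The Boolean query `∃ x y (x →^L y)` (no free variables). -/
def boolAtomQ (A : Type) (L : Language A) : C2RPQ A Empty where
  Var := Fin 2
  finVar := inferInstance
  free := Empty.elim
  Idx := Unit
  finIdx := inferInstance
  src := fun _ => 0
  tgt := fun _ => 1
  lang := fun _ => liftLang L

/-!
A forward path labelled `w` is the same thing as a homomorphism out of the path database of `w`,
and homomorphisms between path databases are shifts, so they witness factors.

If `L_ff` is finite, the query is equivalent to the union of the path CQs of the words of `L_ff`,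
because every word of `L` has a factor in `L_ff`. Conversely, a UCQ whose disjuncts have at most
`N` variables in total and holds on a database already holds on the sub-database induced by the
image of a match, which has at most `N` vertices. Take `w ∈ L_ff` with `|w| ≥ N`. Applying this
to the path database of `w` gives an `L`-path inside fewer than `|w| + 1` of its vertices. The
label of that path is a factor of `w`, hence `w` itself, and a path labelled `w` there visits
`|w| + 1` distinct vertices.
-/

section Homomorphisms

variable {A V W X : Type}

def IsGraphHom (E : V → A → V → Prop) (E' : W → A → W → Prop) (f : V → W) : Prop :=
  ∀ u a v, E u a v → E' (f u) a (f v)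

theorem IsGraphHom.comp {E : V → A → V → Prop} {E' : W → A → W → Prop}
    {E'' : X → A → X → Prop} {g : W → X} {f : V → W}
    (hg : IsGraphHom E' E'' g) (hf : IsGraphHom E E' f) : IsGraphHom E E'' (g ∘ f) :=
  fun u a v h => hg _ a _ (hf u a v h)

def induced (E : V → A → V → Prop) (S : Set V) (u : S) (a : A) (v : S) : Prop :=
  E u a v

def wordDB (w : List A) (i : Fin (w.length + 1)) (a : A) (j : Fin (w.length + 1)) : Prop :=
  w[(i : ℕ)]? = some a ∧ (j : ℕ) = i + 1

theorem isGraphHom_wordDB_cons_succ (a : A) (w : List A) :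
    IsGraphHom (wordDB w) (wordDB (a :: w)) Fin.succ := by
  rintro i b j ⟨hi, hj⟩
  exact ⟨by simpa using hi, by simp [hj]⟩

theorem IsGraphHom.opath {E : V → A → V → Prop} :
    ∀ {w : List A} {f : Fin (w.length + 1) → V}, IsGraphHom (wordDB w) E f →
      OPath E (f 0) (w.map Sum.inl) (f (Fin.last _))
  | [], _, _ => .nil _
  | a :: w, _, hf =>
    .fwd (hf 0 a 1 ⟨rfl, rfl⟩) (IsGraphHom.opath (hf.comp (isGraphHom_wordDB_cons_succ a w)))

theorem OPath.exists_isGraphHom {E : V → A → V → Prop} :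
    ∀ {w : List A} {u v : V}, OPath E u (w.map Sum.inl) v →
      ∃ f : Fin (w.length + 1) → V, IsGraphHom (wordDB w) E f ∧ f 0 = u
  | [], u, _, _ => ⟨fun _ => u, fun _ _ _ ⟨hi, _⟩ => by simp at hi, rfl⟩
  | a :: w, u, v, .fwd (v := m) hum hm => by
    obtain ⟨f, hf, hf0⟩ := OPath.exists_isGraphHom hm
    refine ⟨Fin.cons u f, ?_, rfl⟩
    rintro i b j ⟨hi, hj⟩
    cases i using Fin.cases with
    | zero =>
      obtain rfl : j = 1 := Fin.ext hj
      obtain rfl : a = b := by simpa using hi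
      simpa [hf0] using hum
    | succ i =>
      obtain ⟨j, rfl⟩ : ∃ j' : Fin (w.length + 1), j = j'.succ :=
        ⟨j.pred (by rintro rfl; simp at hj), by simp⟩
      exact hf i b j ⟨by simpa using hi, by simpa using hj⟩

theorem exists_opath_iff_exists_isGraphHom {E : V → A → V → Prop} {w : List A} :
    (∃ u v, OPath E u (w.map Sum.inl) v) ↔
      ∃ f : Fin (w.length + 1) → V, IsGraphHom (wordDB w) E f :=
  ⟨fun ⟨_, _, h⟩ => (h.exists_isGraphHom).imp fun _ => And.left,
    fun ⟨_, hf⟩ => ⟨_, _, hf.opath⟩⟩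

end Homomorphisms

section WordDB

variable {A : Type} {v w : List A}

theorem IsGraphHom.val_wordDB {f : Fin (v.length + 1) → Fin (w.length + 1)}
    (hf : IsGraphHom (wordDB v) (wordDB w) f) (i : Fin (v.length + 1)) :
    (f i : ℕ) = f 0 + i := by
  induction i using Fin.induction with
  | zero => simp
  | succ i ih =>
    have := (hf i.castSucc v[i] i.succ ⟨by simp, rfl⟩).2
    simp only [Fin.val_succ, Fin.val_castSucc] at this ih ⊢
    omega

theorem IsGraphHom.injective_wordDB {f : Fin (v.length + 1) → Fin (w.length + 1)}
    (hf : IsGraphHom (wordDB v) (wordDB w) f) : Function.Injective f := fun i j hij => by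
  have := congrArg Fin.val hij
  rw [hf.val_wordDB i, hf.val_wordDB j] at this
  exact Fin.ext (by omega)

theorem IsGraphHom.infix_wordDB {f : Fin (v.length + 1) → Fin (w.length + 1)}
    (hf : IsGraphHom (wordDB v) (wordDB w) f) : v <:+: w := by
  refine List.infix_iff_getElem?.2 ⟨f 0, ?_, fun i hi => ?_⟩
  · have := hf.val_wordDB (Fin.last _)
    have := (f (Fin.last _)).isLt
    simp only [Fin.val_last] at *
    omega
  · have := (hf ⟨i, by omega⟩ v[i] ⟨i + 1, by omega⟩ ⟨by simp, rfl⟩).1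
    rwa [hf.val_wordDB, add_comm] at this

theorem exists_isGraphHom_wordDB_of_infix (h : v <:+: w) :
    ∃ f : Fin (v.length + 1) → Fin (w.length + 1), IsGraphHom (wordDB v) (wordDB w) f := by
  obtain ⟨k, hk, hget⟩ := List.infix_iff_getElem?.1 h
  refine ⟨fun i => ⟨i + k, by omega⟩, fun i a j ⟨hi, hj⟩ => ⟨?_, by simp [hj]; omega⟩⟩
  obtain ⟨hlt, rfl⟩ := List.getElem?_eq_some_iff.1 hi
  exact hget i hlt

end WordDB

section Queries

variable {A V : Type}

def pathCQ (w : List A) : CQ A Empty where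
  Var := Fin (w.length + 1)
  finVar := inferInstance
  free := Empty.elim
  atoms := {t | wordDB w t.1 t.2.1 t.2.2}
  eqs := ∅

theorem pathCQ_eval_iff {w : List A} {E : V → A → V → Prop} {t : Empty → V} :
    (pathCQ w).eval E t ↔ ∃ f : Fin (w.length + 1) → V, IsGraphHom (wordDB w) E f :=
  ⟨fun ⟨f, _, hf, _⟩ => ⟨f, hf⟩,
    fun ⟨f, hf⟩ => ⟨f, Empty.rec, hf, fun _ _ h => h.elim⟩⟩

theorem eval_boolAtomQ_iff {L : Language A} {E : V → A → V → Prop} {t : Empty → V} :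
    UC2RPQ.eval [boolAtomQ A L] E t ↔
      ∃ w ∈ L, ∃ f : Fin (w.length + 1) → V, IsGraphHom (wordDB w) E f := by
  constructor
  · rintro ⟨γ, hγ, hγE⟩
    obtain rfl := List.mem_singleton.1 hγ
    obtain ⟨_, -, hpath⟩ := hγE
    obtain ⟨-, ⟨w, hwL, rfl⟩, hp⟩ := hpath ()
    exact ⟨w, hwL, exists_opath_iff_exists_isGraphHom.1 ⟨_, _, hp⟩⟩
  · rintro ⟨w, hwL, hf⟩
    obtain ⟨u, v, hp⟩ := exists_opath_iff_exists_isGraphHom.2 hf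
    exact ⟨_, List.mem_singleton_self _, ![u, v], Empty.rec, fun _ => ⟨_, ⟨w, hwL, rfl⟩, hp⟩⟩

theorem CQ.exists_induced_eval {φ : CQ A Empty} {E : V → A → V → Prop} {t : Empty → V}
    (hφ : φ.eval E t) :
    ∃ S : Set V, Nat.card S ≤ Nat.card φ.Var ∧ φ.eval (induced E S) Empty.elim := by
  obtain ⟨h, -, hatoms, heqs⟩ := hφ
  exact ⟨Set.range h, Finite.card_range_le h, Set.rangeFactorization h, Empty.rec,
    hatoms, fun x y hxy => Subtype.ext (heqs x y hxy)⟩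

theorem UC2RPQ.Bounded.exists_induced_eval {Γ : UC2RPQ A Empty} (hΓ : Γ.Bounded) :
    ∃ N : ℕ, ∀ (V : Type) [Finite V] (E : V → A → V → Prop), Γ.eval E Empty.elim →
      ∃ S : Set V, Nat.card S ≤ N ∧ Γ.eval (induced E S) Empty.elim := by
  obtain ⟨Φ, hΦ⟩ := hΓ
  refine ⟨(Φ.map fun φ => Nat.card φ.Var).sum, fun V _ E hE => ?_⟩
  have := Fintype.ofFinite V
  obtain ⟨φ, hφ, hφE⟩ := (hΦ V E _).1 hE
  obtain ⟨S, hS, hφS⟩ := CQ.exists_induced_eval hφE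
  have := Fintype.ofFinite S
  exact ⟨S, hS.trans (List.le_sum_of_mem (List.mem_map_of_mem hφ)), (hΦ S _ _).2 ⟨φ, hφ, hφS⟩⟩

end Queries

section FactorFree

variable {A : Type} {L : Language A}

theorem exists_mem_Lff_infix {w : List A} (hw : w ∈ L) : ∃ v ∈ Lff L, v <:+: w := by
  induction hn : w.length using Nat.strong_induction_on generalizing w with
  | _ n ih =>
    by_cases hff : w ∈ Lff L
    · exact ⟨w, hff, List.infix_refl w⟩
    obtain ⟨v, hvL, hvw, hne⟩ : ∃ v ∈ L, v <:+: w ∧ v ≠ w := of_not_not (not_and.1 hff hw)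
    have hlt : v.length < n := hn ▸ lt_of_le_of_ne hvw.length_le (mt hvw.eq_of_length hne)
    obtain ⟨u, hu, huv⟩ := ih _ hlt hvL rfl
    exact ⟨u, hu, huv.trans hvw⟩

theorem equivUCQ_pathCQ_of_finite (hfin : (Lff L).Finite) :
    EquivUCQ [boolAtomQ A L] (hfin.toFinset.toList.map pathCQ) := by
  intro V _ E t
  simp only [eval_boolAtomQ_iff, UCQ.eval, List.mem_map, Finset.mem_toList,
    exists_exists_and_eq_and, pathCQ_eval_iff]
  constructor
  · rintro ⟨w, hw, f, hf⟩
    obtain ⟨v, hv, hvw⟩ := exists_mem_Lff_infix hw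
    obtain ⟨g, hg⟩ := exists_isGraphHom_wordDB_of_infix hvw
    exact ⟨v, hfin.mem_toFinset.2 hv, f ∘ g, hf.comp hg⟩
  · rintro ⟨w, hw, hf⟩
    exact ⟨w, (hfin.mem_toFinset.1 hw).1, hf⟩

theorem length_lt_card_of_eval_induced {w : List A} (hw : w ∈ Lff L)
    {S : Set (Fin (w.length + 1))} {t : Empty → S}
    (hS : UC2RPQ.eval [boolAtomQ A L] (induced (wordDB w) S) t) : w.length < Nat.card S := by
  obtain ⟨w', hw'L, f, hf⟩ := eval_boolAtomQ_iff.1 hS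
  have hf' : IsGraphHom (wordDB w') (wordDB w) (Subtype.val ∘ f) := hf
  obtain rfl : w' = w := by
    by_contra hne
    exact hw.2 ⟨w', hw'L, hf'.infix_wordDB, hne⟩
  simpa using Nat.card_le_card_of_injective f hf'.injective_wordDB.of_comp

end FactorFree

theorem bool_rpq_bounded_iff_ff_finite_general {A : Type} [Fintype A] (L : Language A) :
    UC2RPQ.Bounded [boolAtomQ A L] ↔ (Lff L).Finite := by
  refine ⟨fun hbdd => ?_, fun hfin => ⟨_, equivUCQ_pathCQ_of_finite hfin⟩⟩
  obtain ⟨N, hN⟩ := UC2RPQ.Bounded.exists_induced_eval hbdd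
  by_contra hinf
  obtain ⟨w, hw, hlong⟩ := (Set.Infinite.sdiff hinf (List.finite_length_le A N)).nonempty
  obtain ⟨S, hSN, hS⟩ :=
    hN _ (wordDB w) (eval_boolAtomQ_iff.2 ⟨w, hw.1, id, fun _ _ _ h => h⟩)
  have hlong : ¬ w.length ≤ N := hlong
  have := length_lt_card_of_eval_induced hw hS
  omega

/-- The Boolean CRPQ `∃x,y (x →^L y)` is bounded iff `L_ff` is finite. -/
theorem bool_rpq_bounded_iff_ff_finite {A : Type} [Fintype A] (L : Language A)
    (hreg : L.IsRegular) :
    UC2RPQ.Bounded [boolAtomQ A L] ↔ (Lff L).Finite :=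
  bool_rpq_bounded_iff_ff_finite_general L

end RPQ
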